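/- arXiv:1401.7860 — 2 statements merged into one kernel-verified Lean document; each statement's English description precedes it below -/
import Mathlib

section
/- Suppose L is generic, satisfies the triangle inequality, and s₂ + s₃ < (l_1 + … + l_n)/2. Then any two vertices of Γ(L) are joined by a path in Γ(L) of length at most 13; in particular, Γ(L) is connected. -/
open Finset

/-- `I ⊆ [n]` is *short*: the sum of its lengths is less than that of its complement. -/
def ShortSet {n : ℕ} (L : Fin n → ℝ) (I : Finset (Fin n)) : Prop :=
  ∑ i ∈ I, L i < ∑ i ∈ Iᶜ, L i

/-- `I ⊆ [n]` is *long*: the sum of its lengths is greater than that of its complement. -/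
def LongSet {n : ℕ} (L : Fin n → ℝ) (I : Finset (Fin n)) : Prop :=
  ∑ i ∈ Iᶜ, L i < ∑ i ∈ I, L i

/-- The length vector `L` is *generic*. -/
def GenericVec {n : ℕ} (L : Fin n → ℝ) : Prop :=
  ∀ I : Finset (Fin n), ∑ i ∈ I, L i ≠ ∑ i ∈ Iᶜ, L i

/-- `L` satisfies the triangle inequality: every singleton is short. -/
def TriangleIneq {n : ℕ} (L : Fin n → ℝ) : Prop :=
  ∀ i : Fin n, ShortSet L {i}

/-- Ordered triples of subsets of `[n]`. -/
abbrev LTriple (n : ℕ) := Finset (Fin n) × Finset (Fin n) × Finset (Fin n)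

/-- An ordered triple `(I, J, K)` representing a vertex of `Γ(L)`: three pairwise
disjoint nonempty short sets whose union is `[n]`. -/
def IsVertex {n : ℕ} (L : Fin n → ℝ) (V : LTriple n) : Prop :=
  V.1.Nonempty ∧ V.2.1.Nonempty ∧ V.2.2.Nonempty ∧
  ShortSet L V.1 ∧ ShortSet L V.2.1 ∧ ShortSet L V.2.2 ∧
  Disjoint V.1 V.2.1 ∧ Disjoint V.1 V.2.2 ∧ Disjoint V.2.1 V.2.2 ∧
  V.1 ∪ V.2.1 ∪ V.2.2 = Finset.univ

/-- Cyclic rotation of an ordered triple. -/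
def rotT {n : ℕ} (V : LTriple n) : LTriple n := (V.2.1, V.2.2, V.1)

/-- Two ordered triples represent the same cyclically ordered partition
(`(I,J,K)`, `(J,K,I)` and `(K,I,J)` are identified). -/
def CyclEq {n : ℕ} (V W : LTriple n) : Prop :=
  W = V ∨ W = rotT V ∨ W = rotT (rotT V)

/-- The mirror image of the vertex `(I, J, K)` is the vertex `(J, I, K)`. -/
def mirrorT {n : ℕ} (V : LTriple n) : LTriple n := (V.2.1, V.1, V.2.2)

/-- The elementary move on representatives: shift a nonempty proper subset
`S ⊊ I` to the second part, provided `J ∪ S` stays short. -/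
def MoveStep {n : ℕ} (L : Fin n → ℝ) (V W : LTriple n) : Prop :=
  ∃ S : Finset (Fin n), S.Nonempty ∧ S ⊂ V.1 ∧ ShortSet L (V.2.1 ∪ S) ∧
    W = (V.1 \ S, V.2.1 ∪ S, V.2.2)

/-- Adjacency in `Γ(L)`: one of the two vertices has a representative from which an
elementary move leads to a representative of the other. -/
def GammaAdj {n : ℕ} (L : Fin n → ℝ) (V W : LTriple n) : Prop :=
  (∃ V' W' : LTriple n, CyclEq V V' ∧ MoveStep L V' W' ∧ CyclEq W W') ∨
  (∃ W' V' : LTriple n, CyclEq W W' ∧ MoveStep L W' V' ∧ CyclEq V V')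

/-- There is a path of length `m` (i.e. with `m` consecutive edges) in `Γ(L)`
from the vertex `V` to the vertex `W`. -/
def GammaPath {n : ℕ} (L : Fin n → ℝ) (m : ℕ) (V W : LTriple n) : Prop :=
  ∃ f : ℕ → LTriple n, CyclEq V (f 0) ∧ CyclEq W (f m) ∧
    (∀ i ≤ m, IsVertex L (f i)) ∧ ∀ i < m, GammaAdj L (f i) (f (i + 1))

/-- The list of lengths sorted in nonincreasing order. -/
noncomputable def sortedDesc {n : ℕ} (L : Fin n → ℝ) : List ℝ :=
  List.insertionSort (· ≥ ·) (List.ofFn L)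

/-- The second largest length (with multiplicity). -/
noncomputable def s2 {n : ℕ} (L : Fin n → ℝ) : ℝ := (sortedDesc L).getD 1 0

/-- The third largest length (with multiplicity). -/
noncomputable def s3 {n : ℕ} (L : Fin n → ℝ) : ℝ := (sortedDesc L).getD 2 0

/-!
Fix an index `a` of maximal length and a short set `C ∋ a` that becomes long when any further
element is added. Then `(C, (C ∪ {q})ᶜ, {q})` is a vertex for every `q ∉ C`, and every vertex
reaches such a normal form in five moves: if `a ∈ I`, splitting `I \ {a}` between `J` and `K`
(possible because `l_a` is maximal) leaves `({a}, J', K')`; two moves gather `C` into the first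
part and one more squeezes the third part to a single element. Two normal forms are two moves
apart through `(C, …, {q, q'})`, since `s₂ + s₃` being less than half the total length makes
`{q, q'}` short. Hence any two vertices are at distance at most `5 + 2 + 5 = 12`.
-/

open Finset

theorem sum_union_le_of_nonneg {ι : Type*} [DecidableEq ι] {f : ι → ℝ}
    (hf : ∀ i, 0 ≤ f i) (s t : Finset ι) :
    ∑ i ∈ s ∪ t, f i ≤ ∑ i ∈ s, f i + ∑ i ∈ t, f i := by
  linarith [sum_union_inter (s₁ := s) (s₂ := t) (f := f),
    sum_nonneg fun i (_ : i ∈ s ∩ t) => hf i]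

variable {n : ℕ} {L : Fin n → ℝ}

theorem shortSet_iff {S : Finset (Fin n)} : ShortSet L S ↔ 2 * ∑ i ∈ S, L i < ∑ i, L i := by
  rw [ShortSet, ← sum_add_sum_compl S L]
  constructor <;> intro h <;> linarith

theorem longSet_iff {S : Finset (Fin n)} : LongSet L S ↔ ∑ i, L i < 2 * ∑ i ∈ S, L i := by
  rw [LongSet, ← sum_add_sum_compl S L]
  constructor <;> intro h <;> linarith

theorem shortSet_compl_iff {S : Finset (Fin n)} : ShortSet L Sᶜ ↔ LongSet L S := by
  rw [ShortSet, LongSet, compl_compl]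

theorem ShortSet.not_longSet {S : Finset (Fin n)} (h : ShortSet L S) : ¬LongSet L S :=
  lt_asymm h

theorem ShortSet.mono (hL : ∀ i, 0 ≤ L i) {S T : Finset (Fin n)} (hT : ShortSet L T)
    (h : S ⊆ T) : ShortSet L S := by
  rw [shortSet_iff] at *
  linarith [sum_le_sum_of_subset_of_nonneg h fun i _ _ => hL i]

theorem ShortSet.not_compl_subset (hL : ∀ i, 0 ≤ L i) {C K : Finset (Fin n)}
    (hC : ShortSet L C) (hK : ShortSet L K) : ¬Cᶜ ⊆ K := fun h =>
  hC.not_longSet (shortSet_compl_iff.1 (hK.mono hL h))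

theorem GenericVec.longSet_of_not_shortSet (hgen : GenericVec L) {S : Finset (Fin n)}
    (h : ¬ShortSet L S) : LongSet L S :=
  (not_lt.1 h).lt_of_ne (hgen S).symm

def IsMaximalShort (L : Fin n → ℝ) (C : Finset (Fin n)) : Prop :=
  ShortSet L C ∧ ∀ q ∉ C, LongSet L (insert q C)

theorem GenericVec.exists_maximal_shortSet_union (hgen : GenericVec L) {A : Finset (Fin n)}
    (hA : ShortSet L A) (U : Finset (Fin n)) :
    ∃ S ⊆ U, ShortSet L (A ∪ S) ∧
      ∀ e ∈ U, e ∉ S → LongSet L (insert e (A ∪ S)) := by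
  obtain ⟨S, -, hS⟩ := Finite.exists_le_maximal (p := fun S => S ⊆ U ∧ ShortSet L (A ∪ S))
    (a := ∅) ⟨empty_subset U, by rwa [union_empty]⟩
  refine ⟨S, hS.prop.1, hS.prop.2, fun e he heS =>
    hgen.longSet_of_not_shortSet fun hshort => ?_⟩
  exact heS (hS.2 ⟨insert_subset he hS.prop.1, by rwa [union_insert]⟩ (subset_insert e S)
    (mem_insert_self e S))

theorem GenericVec.exists_isMaximalShort_mem (hgen : GenericVec L) (htri : TriangleIneq L)
    (a : Fin n) : ∃ C, a ∈ C ∧ IsMaximalShort L C := by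
  obtain ⟨S, -, hS, hmax⟩ := hgen.exists_maximal_shortSet_union (htri a) univ
  exact ⟨{a} ∪ S, mem_union_left _ (mem_singleton_self a), hS,
    fun q hq => hmax q (mem_univ q) fun h => hq (mem_union_right _ h)⟩

theorem GenericVec.exists_split (hgen : GenericVec L) (hL : ∀ i, 0 ≤ L i)
    {A B U : Finset (Fin n)} {M : ℝ} (hA : ShortSet L A) (hB : ShortSet L B)
    (hUM : ∀ e ∈ U, L e ≤ M)
    (hsum : ∑ i ∈ A, L i + ∑ i ∈ B, L i + ∑ i ∈ U, L i + M ≤ ∑ i, L i) :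
    ∃ S ⊆ U, ShortSet L (A ∪ S) ∧ ShortSet L (B ∪ (U \ S)) := by
  obtain ⟨S, hSU, hAS, hmax⟩ := hgen.exists_maximal_shortSet_union hA U
  refine ⟨S, hSU, hAS, ?_⟩
  obtain hUS | ⟨e, he⟩ := (U \ S).eq_empty_or_nonempty
  · rwa [hUS, union_empty]
  obtain ⟨heU, heS⟩ := mem_sdiff.1 he
  -- Adding `e` makes `A ∪ S` long, so it misses half the total by less than `l_e ≤ M`,
  -- and `hsum` leaves less than half for `B ∪ (U \ S)`.
  have hlong := longSet_iff.1 (hmax e heU heS)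
  rw [insert_eq] at hlong
  rw [shortSet_iff]
  linarith [sum_union_le_of_nonneg hL {e} (A ∪ S), sum_union_le_of_nonneg hL A S,
    sum_union_le_of_nonneg hL B (U \ S), sum_sdiff hSU (f := L), sum_singleton L e, hUM e heU]

theorem List.Pairwise.le_getD_of_lt_countP {α : Type*} [LinearOrder α] {l : List α}
    (hl : l.Pairwise (· ≥ ·)) {v : α} {k : ℕ} (d : α)
    (hk : k < l.countP (v ≤ ·)) : v ≤ l.getD k d := by
  have hkl : k < l.length := hk.trans_le List.countP_le_length
  rw [List.getD_eq_getElem l d hkl]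
  by_contra! hlt
  have hdrop : (l.drop k).countP (v ≤ ·) = 0 := by
    refine List.countP_eq_zero.2 fun x hx => ?_
    rw [List.drop_eq_getElem_cons hkl] at hx
    have hsorted := List.drop_eq_getElem_cons hkl ▸ hl.drop (i := k)
    rcases List.mem_cons.1 hx with rfl | hx
    · simpa using hlt
    · simpa using (List.rel_of_pairwise_cons hsorted hx).trans_lt hlt
  have htake := (l.take k).countP_le_length (p := (v ≤ ·))
  rw [List.length_take] at htake
  rw [← List.take_append_drop k l, List.countP_append, hdrop] at hk
  omega

theorem card_le_countP_ofFn {α : Type*} (f : Fin n → α) (p : α → Prop) [DecidablePred p]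
    {Q : Finset (Fin n)} (hQ : ∀ i ∈ Q, p (f i)) :
    #Q ≤ (List.ofFn f).countP fun x => decide (p x) := by
  rw [← Multiset.coe_countP, ← Fin.univ_val_map, Multiset.countP_map]
  exact card_le_card fun i hi => mem_filter.2 ⟨mem_univ i, hQ i hi⟩

theorem le_sortedDesc_getD {k : ℕ} {v : ℝ} {Q : Finset (Fin n)} (hk : k < #Q)
    (hQ : ∀ i ∈ Q, v ≤ L i) : v ≤ (sortedDesc L).getD k 0 := by
  refine (List.pairwise_insertionSort _ _).le_getD_of_lt_countP 0 ?_
  rw [(List.perm_insertionSort _ _).countP_eq]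
  exact hk.trans_le (card_le_countP_ofFn L _ hQ)

theorem shortSet_pair (htri : TriangleIneq L) (hs : s2 L + s3 L < (∑ i, L i) / 2) {a : Fin n}
    (ha : ∀ i, L i ≤ L a) {x y : Fin n} (hx : x ≠ a) (hy : y ≠ a) : ShortSet L {x, y} := by
  obtain rfl | hxy := eq_or_ne x y
  · simpa using htri x
  wlog hyx : L y ≤ L x generalizing x y
  · simpa [pair_comm] using this hy hx hxy.symm (le_of_not_ge hyx)
  have h₂ : L x ≤ s2 L := le_sortedDesc_getD (Q := {a, x}) (by simp [hx.symm]) (by simp [ha])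
  have h₃ : L y ≤ s3 L :=
    le_sortedDesc_getD (Q := {a, x, y}) (by simp [hx.symm, hy.symm, hxy]) (by simp [ha, hyx])
  rw [shortSet_iff, sum_pair hxy]
  linarith

theorem CyclEq.refl (V : LTriple n) : CyclEq V V := Or.inl rfl

theorem cyclEq_rotT (V : LTriple n) : CyclEq V (rotT V) := Or.inr (Or.inl rfl)

theorem CyclEq.symm {V W : LTriple n} (h : CyclEq V W) : CyclEq W V := by
  rcases h with rfl | rfl | rfl <;> simp [CyclEq, rotT]

theorem CyclEq.trans {U V W : LTriple n} (h : CyclEq U V) (h' : CyclEq V W) : CyclEq U W := by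
  rcases h with rfl | rfl | rfl <;> rcases h' with rfl | rfl | rfl <;> simp [CyclEq, rotT]

theorem IsVertex.rotT {V : LTriple n} (hV : IsVertex L V) : IsVertex L (rotT V) := by
  obtain ⟨h1, h2, h3, s1, s2, s3, d12, d13, d23, hu⟩ := hV
  exact ⟨h2, h3, h1, s2, s3, s1, d23, d12.symm, d13.symm, by rw [← hu]; grind [_root_.rotT]⟩

theorem IsVertex.of_cyclEq {V W : LTriple n} (hV : IsVertex L V) (h : CyclEq V W) :
    IsVertex L W := by
  rcases h with rfl | rfl | rfl
  exacts [hV, hV.rotT, hV.rotT.rotT]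

theorem IsVertex.mem_or {A B C : Finset (Fin n)} (hV : IsVertex L (A, B, C)) (x : Fin n) :
    x ∈ A ∨ x ∈ B ∨ x ∈ C := by
  obtain ⟨-, -, -, -, -, -, -, -, -, hu⟩ := hV
  have := hu ▸ mem_univ x
  grind

theorem IsVertex.sum_eq {A B C : Finset (Fin n)} (hV : IsVertex L (A, B, C)) :
    ∑ i, L i = ∑ i ∈ A, L i + ∑ i ∈ B, L i + ∑ i ∈ C, L i := by
  obtain ⟨-, -, -, -, -, -, dAB, dAC, dBC, hu⟩ := hV
  rw [← hu, sum_union (disjoint_union_left.2 ⟨dAC, dBC⟩), sum_union dAB]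

theorem IsVertex.mem_snd_iff {A B C : Finset (Fin n)} (hV : IsVertex L (A, B, C)) {x : Fin n} :
    x ∈ B ↔ x ∉ A ∧ x ∉ C := by
  obtain ⟨-, -, -, -, -, -, dAB, -, dBC, -⟩ := id hV
  grind [disjoint_left, hV.mem_or x]

theorem IsVertex.transfer {A B C A' B' : Finset (Fin n)} (hV : IsVertex L (A, B, C))
    (hA' : A'.Nonempty) (hB' : B'.Nonempty) (sA' : ShortSet L A') (sB' : ShortSet L B')
    (hd : Disjoint A' B') (hu : A' ∪ B' = A ∪ B) : IsVertex L (A', B', C) := by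
  obtain ⟨-, -, hC, -, -, sC, -, dAC, dBC, huV⟩ := hV
  have hAB'C : Disjoint (A' ∪ B') C := hu ▸ disjoint_union_left.2 ⟨dAC, dBC⟩
  exact ⟨hA', hB', hC, sA', sB', sC, hd, (disjoint_union_left.1 hAB'C).1,
    (disjoint_union_left.1 hAB'C).2, by rw [hu, huV]⟩

theorem GammaAdj.symm {V W : LTriple n} (h : GammaAdj L V W) : GammaAdj L W V :=
  h.elim Or.inr Or.inl

theorem GammaAdj.congr {V V' W W' : LTriple n} (h : GammaAdj L V W) (hV : CyclEq V V')
    (hW : CyclEq W W') : GammaAdj L V' W' := by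
  rcases h with ⟨X, Y, hX, hXY, hY⟩ | ⟨X, Y, hX, hXY, hY⟩
  · exact Or.inl ⟨X, Y, hV.symm.trans hX, hXY, hW.symm.trans hY⟩
  · exact Or.inr ⟨X, Y, hW.symm.trans hX, hXY, hV.symm.trans hY⟩

theorem GammaPath.append {m₁ m₂ : ℕ} {U V W : LTriple n} (h₁ : GammaPath L m₁ U V)
    (h₂ : GammaPath L m₂ V W) : GammaPath L (m₁ + m₂) U W := by
  obtain ⟨f, hf0, hfm, hfv, hfa⟩ := h₁
  obtain ⟨g, hg0, hgm, hgv, hga⟩ := h₂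
  have hjoin : CyclEq (f m₁) (g 0) := hfm.symm.trans hg0
  refine ⟨fun i => if i < m₁ then f i else g (i - m₁), ?_, ?_, fun i hi => ?_,
    fun i hi => ?_⟩
  · rcases Nat.eq_zero_or_pos m₁ with rfl | hm
    · simpa using hf0.trans hjoin
    · simpa [hm] using hf0
  · simpa using hgm
  · by_cases h : i < m₁
    · simpa [h] using hfv i h.le
    · simpa [h] using hgv (i - m₁) (by omega)
  · by_cases h : i + 1 < m₁
    · simpa [h, show i < m₁ by omega] using hfa i (by omega)
    by_cases h' : i < m₁
    · obtain rfl : m₁ = i + 1 := by omega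
      simpa [h'] using (hfa i h').congr (.refl _) hjoin
    · simpa [h, h', show i + 1 - m₁ = i - m₁ + 1 by omega] using hga (i - m₁) (by omega)

theorem GammaPath.reverse {m : ℕ} {V W : LTriple n} (h : GammaPath L m V W) :
    GammaPath L m W V := by
  obtain ⟨f, hf0, hfm, hfv, hfa⟩ := h
  refine ⟨fun i => f (m - i), by simpa using hfm, by simpa using hf0,
    fun i _ => hfv (m - i) (by omega), fun i hi => ?_⟩
  show GammaAdj L (f (m - i)) (f (m - (i + 1)))
  rw [show m - i = m - (i + 1) + 1 by omega]
  exact (hfa (m - (i + 1)) (by omega)).symm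

def GammaReach (L : Fin n → ℝ) (k : ℕ) (V W : LTriple n) : Prop :=
  ∃ m ≤ k, GammaPath L m V W

theorem gammaReach_zero {V : LTriple n} (hV : IsVertex L V) : GammaReach L 0 V V :=
  ⟨0, le_rfl, fun _ => V, .refl V, .refl V, fun _ _ => hV,
    fun _ hi => absurd hi (Nat.not_lt_zero _)⟩

theorem GammaAdj.gammaReach_one {V W : LTriple n} (h : GammaAdj L V W) (hV : IsVertex L V)
    (hW : IsVertex L W) : GammaReach L 1 V W := by
  refine ⟨1, le_rfl, fun i => if i = 0 then V else W, by simpa using .refl V,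
    by simpa using .refl W, fun i _ => ?_, fun i hi => ?_⟩
  · by_cases hi : i = 0 <;> simp [hi, hV, hW]
  · obtain rfl : i = 0 := by omega
    simpa using h

theorem GammaReach.trans {k₁ k₂ : ℕ} {U V W : LTriple n} (h₁ : GammaReach L k₁ U V)
    (h₂ : GammaReach L k₂ V W) : GammaReach L (k₁ + k₂) U W := by
  obtain ⟨m₁, hm₁, p₁⟩ := h₁
  obtain ⟨m₂, hm₂, p₂⟩ := h₂
  exact ⟨m₁ + m₂, add_le_add hm₁ hm₂, p₁.append p₂⟩

theorem GammaReach.symm {k : ℕ} {V W : LTriple n} (h : GammaReach L k V W) :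
    GammaReach L k W V :=
  let ⟨m, hm, p⟩ := h; ⟨m, hm, p.reverse⟩

theorem GammaReach.mono {k k' : ℕ} {V W : LTriple n} (h : GammaReach L k V W) (hk : k ≤ k') :
    GammaReach L k' V W :=
  let ⟨m, hm, p⟩ := h; ⟨m, hm.trans hk, p⟩

theorem GammaReach.congr {k : ℕ} {V V' W W' : LTriple n} (h : GammaReach L k V W)
    (hV : CyclEq V V') (hW : CyclEq W W') : GammaReach L k V' W' :=
  let ⟨m, hm, f, hf0, hfm, hfv, hfa⟩ := h
  ⟨m, hm, f, hV.symm.trans hf0, hW.symm.trans hfm, hfv, hfa⟩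

theorem GammaReach.isVertex_right {k : ℕ} {V W : LTriple n} (h : GammaReach L k V W) :
    IsVertex L W :=
  let ⟨m, _, _, _, hfm, hfv, _⟩ := h
  (hfv m le_rfl).of_cyclEq hfm.symm

theorem gammaReach_rotT_iff {k : ℕ} {V W : LTriple n} :
    GammaReach L k (rotT V) (rotT W) ↔ GammaReach L k V W :=
  ⟨fun h => h.congr (cyclEq_rotT V).symm (cyclEq_rotT W).symm,
    fun h => h.congr (cyclEq_rotT V) (cyclEq_rotT W)⟩

theorem IsVertex.gammaReach_one_of_subset {A B C A' B' : Finset (Fin n)}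
    (hV : IsVertex L (A, B, C)) (hW : IsVertex L (A', B', C)) (h : A' ⊆ A) :
    GammaReach L 1 (A, B, C) (A', B', C) := by
  obtain ⟨-, -, -, -, -, -, -, dAC, -⟩ := id hV
  obtain ⟨hA', -, -, -, sB', -⟩ := id hW
  have hA : A \ (A \ A') = A' := Finset.sdiff_sdiff_eq_self h
  have hB : B ∪ (A \ A') = B' := by
    ext x
    rw [mem_union, mem_sdiff, hV.mem_snd_iff, hW.mem_snd_iff]
    grind [disjoint_left]
  obtain hS | hS := (A \ A').eq_empty_or_nonempty
  · rw [hS, sdiff_empty] at hA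
    rw [hS, union_empty] at hB
    subst hA hB
    exact (gammaReach_zero hV).mono zero_le_one
  · refine GammaAdj.gammaReach_one
      (Or.inl ⟨_, _, .refl _, ⟨A \ A', hS, sdiff_ssubset h hA', hB ▸ sB', ?_⟩, .refl _⟩) hV hW
    rw [hA, hB]

section Moves

variable {A B C S : Finset (Fin n)}

theorem IsVertex.gammaReach_move12 (hL : ∀ i, 0 ≤ L i) (hV : IsVertex L (A, B, C))
    (hS : S ⊆ A) (hAS : (A \ S).Nonempty) (hBS : ShortSet L (B ∪ S)) :
    GammaReach L 1 (A, B, C) (A \ S, B ∪ S, C) := by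
  obtain ⟨-, hB, -, sA, -, -, dAB, -⟩ := id hV
  have hW := hV.transfer hAS (hB.mono subset_union_left) (sA.mono hL sdiff_subset) hBS
    (by grind [disjoint_left]) (by grind)
  exact hV.gammaReach_one_of_subset hW sdiff_subset

theorem IsVertex.gammaReach_move21 (hL : ∀ i, 0 ≤ L i) (hV : IsVertex L (A, B, C))
    (hS : S ⊆ B) (hBS : (B \ S).Nonempty) (hAS : ShortSet L (A ∪ S)) :
    GammaReach L 1 (A, B, C) (A ∪ S, B \ S, C) := by
  obtain ⟨hA, -, -, -, sB, -, dAB, -⟩ := id hV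
  have hW := hV.transfer (hA.mono subset_union_left) hBS hAS (sB.mono hL sdiff_subset)
    (by grind [disjoint_left]) (by grind)
  exact (hW.gammaReach_one_of_subset hV subset_union_left).symm

theorem IsVertex.gammaReach_move23 (hL : ∀ i, 0 ≤ L i) (hV : IsVertex L (A, B, C))
    (hS : S ⊆ B) (hBS : (B \ S).Nonempty) (hCS : ShortSet L (C ∪ S)) :
    GammaReach L 1 (A, B, C) (A, B \ S, C ∪ S) :=
  gammaReach_rotT_iff.1 (hV.rotT.gammaReach_move12 hL hS hBS hCS)

theorem IsVertex.gammaReach_move32 (hL : ∀ i, 0 ≤ L i) (hV : IsVertex L (A, B, C))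
    (hS : S ⊆ C) (hCS : (C \ S).Nonempty) (hBS : ShortSet L (B ∪ S)) :
    GammaReach L 1 (A, B, C) (A, B ∪ S, C \ S) :=
  gammaReach_rotT_iff.1 (hV.rotT.gammaReach_move21 hL hS hCS hBS)

theorem IsVertex.gammaReach_move13 (hL : ∀ i, 0 ≤ L i) (hV : IsVertex L (A, B, C))
    (hS : S ⊆ A) (hAS : (A \ S).Nonempty) (hCS : ShortSet L (C ∪ S)) :
    GammaReach L 1 (A, B, C) (A \ S, B, C ∪ S) :=
  gammaReach_rotT_iff.1 (gammaReach_rotT_iff.1 (hV.rotT.rotT.gammaReach_move21 hL hS hAS hCS))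

theorem IsVertex.gammaReach_move31 (hL : ∀ i, 0 ≤ L i) (hV : IsVertex L (A, B, C))
    (hS : S ⊆ C) (hCS : (C \ S).Nonempty) (hAS : ShortSet L (A ∪ S)) :
    GammaReach L 1 (A, B, C) (A ∪ S, B, C \ S) :=
  gammaReach_rotT_iff.1 (gammaReach_rotT_iff.1 (hV.rotT.rotT.gammaReach_move12 hL hS hCS hAS))

end Moves

theorem GenericVec.exists_gammaReach_singleton_fst (hgen : GenericVec L) (hL : ∀ i, 0 ≤ L i)
    {I J K : Finset (Fin n)} (hV : IsVertex L (I, J, K)) {a : Fin n} (haI : a ∈ I)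
    (ha : ∀ e ∈ I, L e ≤ L a) : ∃ J' K', GammaReach L 2 (I, J, K) ({a}, J', K') := by
  obtain ⟨-, -, -, -, sJ, sK, -⟩ := id hV
  obtain ⟨S, hSU, hJS, hKS⟩ := hgen.exists_split hL sJ sK (U := I.erase a) (fun e he => ha e (mem_of_mem_erase he))
    (by linarith [hV.sum_eq, sum_erase_add I L haI])
  have haS : a ∉ S := fun h => notMem_erase a I (hSU h)
  have r₁ := hV.gammaReach_move12 hL (hSU.trans (erase_subset a I))
    ⟨a, mem_sdiff.2 ⟨haI, haS⟩⟩ hJS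
  have hrest : (I \ S) \ (I.erase a \ S) = {a} := by grind
  have r₂ := r₁.isVertex_right.gammaReach_move13 hL (S := I.erase a \ S) (by grind)
    (by rw [hrest]; exact singleton_nonempty a) hKS
  rw [hrest] at r₂
  exact ⟨_, _, r₁.trans r₂⟩

theorem IsMaximalShort.exists_gammaReach_of_fst_subset {C : Finset (Fin n)}
    (hC : IsMaximalShort L C)
    (hL : ∀ i, 0 ≤ L i) {A J K : Finset (Fin n)} (hV : IsVertex L (A, J, K)) (hAC : A ⊆ C) :
    ∃ q ∉ C, GammaReach L 3 (A, J, K) (C, (insert q C)ᶜ, {q}) := by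
  obtain ⟨-, -, -, -, sJ, sK, -, -, dJK, -⟩ := id hV
  have hJC : (J \ C).Nonempty := by
    refine sdiff_nonempty.2 fun hJ => hC.1.not_compl_subset hL sK fun x hx => ?_
    rcases hV.mem_or x with h | h | h
    · exact absurd (hAC h) (mem_compl.1 hx)
    · exact absurd (hJ h) (mem_compl.1 hx)
    · exact h
  have hKC : (K \ C).Nonempty := by
    refine sdiff_nonempty.2 fun hK => hC.1.not_compl_subset hL sJ fun x hx => ?_
    rcases hV.mem_or x with h | h | h
    · exact absurd (hAC h) (mem_compl.1 hx)
    · exact h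
    · exact absurd (hK h) (mem_compl.1 hx)
  have r₁ := hV.gammaReach_move21 hL inter_subset_left
    (by rwa [sdiff_inter_self_left]) (hC.1.mono hL (union_subset hAC inter_subset_right))
  rw [sdiff_inter_self_left] at r₁
  have hfill : A ∪ J ∩ C ∪ K ∩ C = C := by grind [hV.mem_or]
  have r₂ := r₁.isVertex_right.gammaReach_move31 hL inter_subset_left
    (by rwa [sdiff_inter_self_left]) (by rw [hfill]; exact hC.1)
  rw [hfill, sdiff_inter_self_left] at r₂
  obtain ⟨q, hq⟩ := hKC
  have hrest : J \ C ∪ (K \ C).erase q = (insert q C)ᶜ := by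
    ext x
    have := hV.mem_or x
    have : x ∈ A → x ∈ C := @hAC x
    have : x ∈ J → x ∉ K := fun h => disjoint_left.1 dJK h
    simp only [mem_union, mem_sdiff, mem_erase, mem_compl, mem_insert]
    grind
  have r₃ := r₂.isVertex_right.gammaReach_move32 hL (erase_subset q (K \ C))
    (by rw [sdiff_erase_self hq]; exact singleton_nonempty q)
    (by rw [hrest, shortSet_compl_iff]; exact hC.2 q (mem_sdiff.1 hq).2)
  rw [hrest, sdiff_erase_self hq] at r₃
  exact ⟨q, (mem_sdiff.1 hq).2, (r₁.trans r₂).trans r₃⟩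

theorem IsMaximalShort.exists_gammaReach {C : Finset (Fin n)} (hC : IsMaximalShort L C)
    (hgen : GenericVec L)
    (hL : ∀ i, 0 ≤ L i) {a : Fin n} (ha : ∀ i, L i ≤ L a) (haC : a ∈ C) {V : LTriple n}
    (hV : IsVertex L V) : ∃ q ∉ C, GammaReach L 5 V (C, (insert q C)ᶜ, {q}) := by
  suffices key : ∀ {I J K}, IsVertex L (I, J, K) → a ∈ I →
      ∃ q ∉ C, GammaReach L 5 (I, J, K) (C, (insert q C)ᶜ, {q}) by
    rcases hV.mem_or a with h | h | h
    · exact key hV h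
    · obtain ⟨q, hq, r⟩ := key hV.rotT h
      exact ⟨q, hq, r.congr (cyclEq_rotT V).symm (.refl _)⟩
    · obtain ⟨q, hq, r⟩ := key hV.rotT.rotT h
      exact ⟨q, hq, r.congr ((cyclEq_rotT V).trans (cyclEq_rotT _)).symm (.refl _)⟩
  intro I J K hV haI
  obtain ⟨J', K', r₁⟩ := hgen.exists_gammaReach_singleton_fst hL hV haI fun e _ => ha e
  obtain ⟨q, hq, r₂⟩ := hC.exists_gammaReach_of_fst_subset hL r₁.isVertex_right
    (singleton_subset_iff.2 haC)
  exact ⟨q, hq, r₁.trans r₂⟩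

theorem IsMaximalShort.gammaReach_two_of_shortSet_pair {C : Finset (Fin n)}
    (hC : IsMaximalShort L C) (hL : ∀ i, 0 ≤ L i) {q q' : Fin n}
    (hV : IsVertex L (C, (insert q C)ᶜ, {q})) (hq : q ∉ C) (hq' : q' ∉ C)
    (hqq' : ShortSet L {q, q'}) :
    GammaReach L 2 (C, (insert q C)ᶜ, {q}) (C, (insert q' C)ᶜ, {q'}) := by
  obtain rfl | hne := eq_or_ne q q'
  · exact (gammaReach_zero hV).mono zero_le_two
  have hrest : ((insert q C)ᶜ \ {q'}).Nonempty := by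
    refine sdiff_nonempty.2 fun h => hC.1.not_compl_subset hL hqq' fun x hx => ?_
    have := @h x
    simp only [mem_compl, mem_insert, mem_singleton] at hx this ⊢
    tauto
  have r₁ := hV.gammaReach_move23 hL (S := {q'}) (by simp [hq', hne.symm]) hrest
    (by rwa [← insert_eq])
  have hsnd : (insert q C)ᶜ \ {q'} ∪ {q} = (insert q' C)ᶜ := by
    ext x
    simp only [mem_union, mem_sdiff, mem_compl, mem_insert, mem_singleton]
    grind
  have hthd : ({q} ∪ {q'} : Finset (Fin n)) \ {q} = {q'} := by grind
  have r₂ := r₁.isVertex_right.gammaReach_move32 hL (S := {q}) subset_union_left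
    (by rw [hthd]; exact singleton_nonempty q')
    (by rw [hsnd, shortSet_compl_iff]; exact hC.2 q' hq')
  rw [hsnd, hthd] at r₂
  exact r₁.trans r₂

/-- If `L` is generic, satisfies the triangle inequality, and
`s₂ + s₃ < (l₁ + ⋯ + lₙ)/2`, then any two vertices of `Γ(L)` are joined by a path in
`Γ(L)` of length at most 13; in particular `Γ(L)` is connected. -/
theorem navigation_at_most_13 (n : ℕ) (hn : 3 ≤ n) (L : Fin n → ℝ)
    (hpos : ∀ i, 0 < L i) (hgen : GenericVec L) (htri : TriangleIneq L)
    (hs : s2 L + s3 L < (∑ i, L i) / 2) :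
    ∀ V W : LTriple n, IsVertex L V → IsVertex L W →
      ∃ m ≤ 13, GammaPath L m V W := by
  intro V W hV hW
  have hL : ∀ i, 0 ≤ L i := fun i => (hpos i).le
  have : Nonempty (Fin n) := ⟨⟨0, by omega⟩⟩
  obtain ⟨a, ha⟩ := Finite.exists_max L
  obtain ⟨C, haC, hC⟩ := hgen.exists_isMaximalShort_mem htri a
  obtain ⟨q, hq, rV⟩ := hC.exists_gammaReach hgen hL ha haC hV
  obtain ⟨q', hq', rW⟩ := hC.exists_gammaReach hgen hL ha haC hW
  have hqq' : ShortSet L {q, q'} :=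
    shortSet_pair htri hs ha (fun h => hq (h ▸ haC)) (fun h => hq' (h ▸ haC))
  have rmid := hC.gammaReach_two_of_shortSet_pair hL rV.isVertex_right hq hq' hqq'
  exact ((rV.trans rmid).trans rW.symm).mono (by norm_num)
end

section
/- Suppose L is generic and satisfies the triangle inequality. For 1 ≤ k ≤ n let N_k denote the number of short subsets of [n] of cardinality k. Then the number of vertices of Γ(L) equals Σ_{k=1}^{n} N_k·2^{n−k} − 2·3^{n−1} + 2^n. (Equivalently, the number of ordered triples (I, J, K) of pairwise disjoint nonempty short subsets with I ∪ J ∪ K = [n] equals 3·(Σ_{k=1}^{n} N_k·2^{n−k} − 2·3^{n−1} + 2^n).) -/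
open Finset

open scoped Classical in
/-- The finset of ordered triples representing vertices of `Γ(L)`; the number of
vertices of `Γ(L)` is one third of its cardinality. -/
noncomputable def vertexTriples {n : ℕ} (L : Fin n → ℝ) : Finset (LTriple n) :=
  Finset.univ.filter (fun V => IsVertex L V)

open scoped Classical in
/-- The number of short subsets of `[n]` of cardinality `k`. -/
noncomputable def numShortSets {n : ℕ} (L : Fin n → ℝ) (k : ℕ) : ℕ :=
  (Finset.univ.filter (fun I : Finset (Fin n) => I.card = k ∧ ShortSet L I)).card

/-! A vertex triple is the same thing as a map `f : [n] → Fin 3` all of whose fibers are short: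
a partition into three short parts has no empty part, since two short sets cannot cover `[n]`.
For positive generic `L` at most one fiber of any `f` fails to be short, so the `3^n` maps split
into the all-short ones and, for each `j`, those whose `j`-th fiber is long. Prescribing a short
fiber `S` leaves two free values on each point of its complement, so `#{f | f⁻¹ j short}` is
`Σ_S 2^(n-|S|) = 2^n + Σ_{k ≥ 1} N_k 2^(n-k)`, and the formula follows from
`#vertices + 3 (3^n - #{f | f⁻¹ j short}) = 3^n`. -/

lemma Finset.sum_apply_card_eq_sum_range {ι M : Type*} [AddCommMonoid M]
    (s : Finset (Finset ι)) (m : ℕ) (hs : ∀ S ∈ s, #S ≤ m) (g : ℕ → M) :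
    ∑ S ∈ s, g #S = ∑ k ∈ range (m + 1), #{S ∈ s | #S = k} • g k := by
  rw [← sum_fiberwise_of_maps_to (g := card) (t := range (m + 1))
    (fun S hS => mem_range_succ_iff.mpr (hs S hS))]
  refine sum_congr rfl fun k _ => ?_
  rw [← sum_const]
  exact sum_congr rfl fun S hS => by rw [(mem_filter.mp hS).2]

section Fibers

variable {ι α : Type*} [Fintype ι] [DecidableEq α]

def fiber (f : ι → α) (a : α) : Finset ι := {i | f i = a}

@[simp] lemma mem_fiber {f : ι → α} {a : α} {i : ι} : i ∈ fiber f a ↔ f i = a := by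
  simp [fiber]

lemma disjoint_fiber (f : ι → α) {a b : α} (hab : a ≠ b) : Disjoint (fiber f a) (fiber f b) :=
  disjoint_left.mpr fun _ hia hib => hab ((mem_fiber.mp hia).symm.trans (mem_fiber.mp hib))

variable [Fintype α] [DecidableEq ι]

lemma card_filter_fiber_eq (a : α) (S : Finset ι) :
    #{f : ι → α | fiber f a = S} = (Fintype.card α - 1) ^ (Fintype.card ι - #S) := by
  have : ({f | fiber f a = S} : Finset (ι → α)) =
      Fintype.piFinset (fun i => if i ∈ S then {a} else {a}ᶜ) := by
    ext f
    simp only [mem_filter, mem_univ, true_and, Fintype.mem_piFinset, Finset.ext_iff, mem_fiber]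
    refine forall_congr' fun i => ?_
    split_ifs with hi <;> simp [hi]
  rw [this, Fintype.card_piFinset, ← card_compl, ← filter_univ_mem S, compl_filter]
  simp [apply_ite, prod_ite, card_compl]

lemma card_filter_fiber (P : Finset ι → Prop) [DecidablePred P] (a : α) :
    #{f : ι → α | P (fiber f a)} = ∑ S with P S, (Fintype.card α - 1) ^ (Fintype.card ι - #S) := by
  rw [card_eq_sum_card_fiberwise (f := (fiber · a)) (t := {S | P S}) (by intro f; simp)]
  refine sum_congr rfl fun S hS => ?_
  rw [filter_filter, ← card_filter_fiber_eq a S]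
  congr 1
  ext f
  simp_all

end Fibers

section ShortSets

variable {n : ℕ} {L : Fin n → ℝ}

noncomputable instance : DecidablePred (ShortSet L) := fun _ => Real.decidableLT _ _

lemma shortSet_iff_two_mul_sum_lt {I : Finset (Fin n)} :
    ShortSet L I ↔ 2 * ∑ i ∈ I, L i < ∑ i, L i := by
  rw [ShortSet, ← sum_add_sum_compl I L]
  constructor <;> intro h <;> linarith

lemma ShortSet.sum_add_sum_lt {I J : Finset (Fin n)} (hI : ShortSet L I) (hJ : ShortSet L J) :
    ∑ i ∈ I, L i + ∑ i ∈ J, L i < ∑ i, L i := by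
  rw [shortSet_iff_two_mul_sum_lt] at hI hJ
  linarith

lemma shortSet_empty (hpos : ∀ i, 0 < L i) (hn : 0 < n) : ShortSet L ∅ := by
  have : Nonempty (Fin n) := ⟨⟨0, hn⟩⟩
  rw [ShortSet, sum_empty, compl_empty]
  exact sum_pos (fun i _ => hpos i) univ_nonempty

lemma shortSet_of_disjoint_of_not_shortSet (hpos : ∀ i, 0 < L i) (hgen : GenericVec L)
    {I J : Finset (Fin n)} (hIJ : Disjoint I J) (hI : ¬ ShortSet L I) : ShortSet L J := by
  by_contra hJ
  rw [ShortSet, not_lt] at hI hJ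
  have hI' := lt_of_le_of_ne hI (hgen I).symm
  have hJI : ∑ i ∈ J, L i ≤ ∑ i ∈ Iᶜ, L i :=
    sum_le_sum_of_subset_of_nonneg (subset_compl_iff_disjoint_right.mpr hIJ.symm)
      fun i _ _ => (hpos i).le
  have hIJ' : ∑ i ∈ I, L i ≤ ∑ i ∈ Jᶜ, L i :=
    sum_le_sum_of_subset_of_nonneg (subset_compl_iff_disjoint_right.mpr hIJ)
      fun i _ _ => (hpos i).le
  linarith

end ShortSets

section Triples

variable {n : ℕ} {L : Fin n → ℝ}

lemma isVertex_iff {V : LTriple n} :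
    IsVertex L V ↔ ShortSet L V.1 ∧ ShortSet L V.2.1 ∧ ShortSet L V.2.2 ∧
      Disjoint V.1 V.2.1 ∧ Disjoint V.1 V.2.2 ∧ Disjoint V.2.1 V.2.2 ∧
      V.1 ∪ V.2.1 ∪ V.2.2 = univ := by
  refine ⟨fun h => h.2.2.2, fun h => ?_⟩
  obtain ⟨hI, hJ, hK, hIJ, hIK, hJK, hu⟩ := h
  have hsum : ∑ i ∈ V.1, L i + ∑ i ∈ V.2.1, L i + ∑ i ∈ V.2.2, L i = ∑ i, L i := by
    rw [← sum_union hIJ, ← sum_union (disjoint_union_left.mpr ⟨hIK, hJK⟩), hu]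
  have hIJs := hI.sum_add_sum_lt hJ
  have hIKs := hI.sum_add_sum_lt hK
  have hJKs := hJ.sum_add_sum_lt hK
  -- an empty part would leave the other two short parts covering `[n]`
  refine ⟨?_, ?_, ?_, hI, hJ, hK, hIJ, hIK, hJK, hu⟩ <;>
    · rw [nonempty_iff_ne_empty]
      intro h
      rw [h, sum_empty] at hsum
      linarith

def toTriple (f : Fin n → Fin 3) : LTriple n := (fiber f 0, fiber f 1, fiber f 2)

lemma toTriple_injective : Function.Injective (toTriple (n := n)) := by
  intro f g h
  simp only [toTriple, Prod.mk.injEq, Finset.ext_iff, mem_fiber] at h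
  obtain ⟨h0, h1, h2⟩ := h
  funext i
  have := h0 i; have := h1 i; have := h2 i
  omega

lemma exists_toTriple_eq {V : LTriple n} (hIJ : Disjoint V.1 V.2.1) (hIK : Disjoint V.1 V.2.2)
    (hJK : Disjoint V.2.1 V.2.2) (hu : V.1 ∪ V.2.1 ∪ V.2.2 = univ) : ∃ f, toTriple f = V := by
  refine ⟨fun i => if i ∈ V.1 then 0 else if i ∈ V.2.1 then 1 else 2, ?_⟩
  obtain ⟨I, J, K⟩ := V
  dsimp only at hIJ hIK hJK hu
  have hmem : ∀ i, i ∈ I ∨ i ∈ J ∨ i ∈ K := fun i => by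
    simpa [← hu, or_assoc] using mem_univ i
  have hJI := hIJ.symm; have hKI := hIK.symm; have hKJ := hJK.symm
  simp only [disjoint_left] at hIJ hIK hJK hJI hKI hKJ
  simp only [toTriple, Prod.mk.injEq, Finset.ext_iff, mem_fiber]
  refine ⟨fun i => ?_, fun i => ?_, fun i => ?_⟩ <;>
    rcases hmem i with h | h | h <;> simp_all

lemma isVertex_toTriple_iff {f : Fin n → Fin 3} :
    IsVertex L (toTriple f) ↔ ∀ j, ShortSet L (fiber f j) := by
  have hu : fiber f 0 ∪ fiber f 1 ∪ fiber f 2 = univ := by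
    ext i
    simp only [mem_union, mem_fiber, mem_univ, iff_true]
    omega
  rw [isVertex_iff]
  refine ⟨fun h j => ?_, fun h => ⟨h 0, h 1, h 2, disjoint_fiber f (by decide),
    disjoint_fiber f (by decide), disjoint_fiber f (by decide), hu⟩⟩
  fin_cases j
  exacts [h.1, h.2.1, h.2.2.1]

lemma card_vertexTriples :
    #(vertexTriples L) = #{f : Fin n → Fin 3 | ∀ j, ShortSet L (fiber f j)} := by
  rw [← card_image_of_injective _ toTriple_injective]
  congr 1
  ext V
  simp only [vertexTriples, mem_filter, mem_univ, true_and, mem_image]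
  constructor
  · intro hV
    obtain ⟨-, -, -, hIJ, hIK, hJK, hu⟩ := isVertex_iff.mp hV
    obtain ⟨f, hf⟩ := exists_toTriple_eq hIJ hIK hJK hu
    exact ⟨f, isVertex_toTriple_iff.mp (hf ▸ hV), hf⟩
  · rintro ⟨f, hf, rfl⟩
    exact isVertex_toTriple_iff.mpr hf

end Triples

section Counting

variable {n : ℕ} {L : Fin n → ℝ}

lemma numShortSets_zero (hpos : ∀ i, 0 < L i) (hn : 0 < n) : numShortSets L 0 = 1 := by
  rw [numShortSets, card_eq_one]
  refine ⟨∅, eq_singleton_iff_unique_mem.mpr ⟨?_, fun S hS => ?_⟩⟩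
  · simpa using shortSet_empty hpos hn
  · simpa using (mem_filter.mp hS).2.1

lemma card_filter_shortSet_fiber {α : Type*} [Fintype α] [DecidableEq α]
    (hpos : ∀ i, 0 < L i) (hn : 0 < n) (a : α) :
    #{f : Fin n → α | ShortSet L (fiber f a)} =
      (Fintype.card α - 1) ^ n +
        ∑ k ∈ Icc 1 n, numShortSets L k * (Fintype.card α - 1) ^ (n - k) := by
  have hcard : ∀ k, #{S ∈ ({S | ShortSet L S} : Finset (Finset (Fin n))) | #S = k} =
      numShortSets L k := by
    intro k
    simp only [numShortSets, filter_filter, and_comm]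
  have hrange : range (n + 1) = insert 0 (Icc 1 n) := by
    ext k
    simp only [mem_range, mem_insert, mem_Icc]
    omega
  rw [card_filter_fiber, Fintype.card_fin,
    sum_apply_card_eq_sum_range _ n (fun S _ => (card_le_univ S).trans_eq (Fintype.card_fin n))
      (fun k => (Fintype.card α - 1) ^ (n - k)), hrange, sum_insert (by simp)]
  simp only [hcard, numShortSets_zero hpos hn, Nat.sub_zero, smul_eq_mul, one_mul]

lemma card_forall_shortSet_fiber_add_sum_card_not {α : Type*} [Fintype α] [DecidableEq α]
    (hpos : ∀ i, 0 < L i) (hgen : GenericVec L) :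
    #{f : Fin n → α | ∀ a, ShortSet L (fiber f a)} +
      ∑ a, #{f : Fin n → α | ¬ ShortSet L (fiber f a)} = Fintype.card α ^ n := by
  have hbiUnion : ({f | ¬ ∀ a, ShortSet L (fiber f a)} : Finset (Fin n → α)) =
      univ.biUnion fun a => {f | ¬ ShortSet L (fiber f a)} := by
    ext
    simp
  have hdisj : ((univ : Finset α) : Set α).PairwiseDisjoint
      fun a => ({f | ¬ ShortSet L (fiber f a)} : Finset (Fin n → α)) := by
    intro a _ b _ hab
    simp only [Function.onFun, disjoint_left, mem_filter, mem_univ, true_and, not_not]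
    exact fun f ha => shortSet_of_disjoint_of_not_shortSet hpos hgen (disjoint_fiber f hab) ha
  rw [← card_biUnion hdisj, ← hbiUnion, card_filter_add_card_filter_not, card_univ,
    Fintype.card_fun, Fintype.card_fin]

end Counting

theorem num_vertices_formula_general (n : ℕ) (hn : 3 ≤ n) (L : Fin n → ℝ)
    (hpos : ∀ i, 0 < L i) (hgen : GenericVec L) :
    ((vertexTriples L).card : ℤ) =
      3 * ((∑ k ∈ Finset.Icc 1 n, (numShortSets L k : ℤ) * 2 ^ (n - k))
        - 2 * 3 ^ (n - 1) + 2 ^ n) := by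
  have hcount : #(vertexTriples L) + ∑ j : Fin 3, #{f : Fin n → Fin 3 | ¬ ShortSet L (fiber f j)}
      = 3 ^ n := by
    rw [card_vertexTriples]
    -- the filters differ only in their `Decidable (∀ j, _)` instances
    convert card_forall_shortSet_fiber_add_sum_card_not hpos hgen
    simp
  have hsplit : ∀ j : Fin 3, #{f : Fin n → Fin 3 | ShortSet L (fiber f j)} +
      #{f : Fin n → Fin 3 | ¬ ShortSet L (fiber f j)} = 3 ^ n := fun j => by
    rw [card_filter_add_card_filter_not, card_univ, Fintype.card_fun, Fintype.card_fin,
      Fintype.card_fin]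
  have hshort : ∀ j : Fin 3, #{f : Fin n → Fin 3 | ShortSet L (fiber f j)} =
      2 ^ n + ∑ k ∈ Icc 1 n, numShortSets L k * 2 ^ (n - k) :=
    card_filter_shortSet_fiber hpos (by omega)
  have h3 : (3 : ℤ) ^ n = 3 * 3 ^ (n - 1) := by
    rw [← pow_succ', Nat.sub_add_cancel (by omega : 1 ≤ n)]
  rw [Fin.sum_univ_three] at hcount
  have h0 := hsplit 0; have h1 := hsplit 1; have h2 := hsplit 2
  rw [hshort] at h0 h1 h2
  zify at hcount h0 h1 h2
  linarith

/-- If `L` is generic and satisfies the triangle inequality, then the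
number of vertices of `Γ(L)` equals `∑_{k=1}^{n} N_k·2^{n−k} − 2·3^{n−1} + 2^n`;
equivalently, the number of ordered vertex triples is three times this quantity. -/
theorem num_vertices_formula (n : ℕ) (hn : 3 ≤ n) (L : Fin n → ℝ)
    (hpos : ∀ i, 0 < L i) (hgen : GenericVec L) (htri : TriangleIneq L) :
    ((vertexTriples L).card : ℤ) =
      3 * ((∑ k ∈ Finset.Icc 1 n, (numShortSets L k : ℤ) * 2 ^ (n - k))
        - 2 * 3 ^ (n - 1) + 2 ^ n) :=
  num_vertices_formula_general n hn L hpos hgen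
end
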